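/- Let C be a category with all limits and finite colimits, such that cofiltered limits commute with finite colimits in C, let X be a profinite space and x ∈ X. Then cosheafification preserves costalks: for every precosheaf A ∈ PCoSh(X,C), the canonical map (A^cosh)_x → A_x is an isomorphism, where the costalk at x of a precosheaf B is B_x = lim over clopen V ∋ x of B(V). -/

import Mathlib

/-! The skyscraper precosheaf `x_* c`, equal to `c` on clopens containing `x` and initial
elsewhere, is a cosheaf, and morphisms `x_* c ⟶ B` are the same as morphisms `c ⟶ B_x`,
naturally in `B`. So, for each `c`, composing with the costalk map `(A^cosh)_x ⟶ A_x` is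
conjugate to composing with the counit `A^cosh ⟶ A` on morphisms out of the cosheaf `x_* c`;
the latter is bijective because the inclusion of cosheaves is fully faithful, and Yoneda
concludes. -/

open CategoryTheory CategoryTheory.Limits TopologicalSpace

attribute [local instance] CategoryTheory.ConcreteCategory.instFunLike

universe w' w v u v₂ u₂ v₁ u₁

namespace ProfiniteCosheaves

variable {C : Type u₂} [Category.{v₂} C]

/-- The canonical binary cofan `A(U) → A(U ⊔ V) ← A(V)` of a precosheaf `A` at a pair of
clopen subsets. -/
def cosheafCofan {X : Type*} [TopologicalSpace X] (A : Clopens X ⥤ C) (U V : Clopens X) :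
    BinaryCofan (A.obj U) (A.obj V) :=
  BinaryCofan.mk (A.map (homOfLE le_sup_left : U ⟶ U ⊔ V)) (A.map (homOfLE le_sup_right))

/-- A precosheaf (a functor on the poset of clopen subsets) is a cosheaf if its value at `∅`
is initial and, for disjoint clopens `U, V`, the canonical cofan exhibits `A(U ⊔ V)` as the
coproduct `A(U) ⨿ A(V)`. -/
structure IsCosheaf {X : Type*} [TopologicalSpace X] (A : Clopens X ⥤ C) : Prop where
  initial : Nonempty (IsInitial (A.obj ⊥))
  binary : ∀ U V : Clopens X, Disjoint U V → Nonempty (IsColimit (cosheafCofan A U V))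

/-- The category `CoSh(X, C)` of cosheaves over a profinite space `X` valued in `C`. -/
def CoSheaf (X : Profinite.{u}) (C : Type u₂) [Category.{v₂} C] :=
  ObjectProperty.FullSubcategory (fun A : Clopens X ⥤ C => IsCosheaf A)

instance (X : Profinite.{u}) : Category (CoSheaf X C) := ObjectProperty.FullSubcategory.category _

/-- Preimage of clopen subsets along a continuous map, as a functor. -/
def clopensComap {X Y : Profinite.{u}} (f : X ⟶ Y) : Clopens Y ⥤ Clopens X where
  obj U := ⟨f ⁻¹' (U : Set Y), U.isClopen.preimage f.hom.hom.continuous⟩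
  map {U V} h := homOfLE (fun x hx => leOfHom h hx)

theorem IsCosheaf.comap {X Y : Profinite.{u}} (f : X ⟶ Y) {A : Clopens X ⥤ C}
    (hA : IsCosheaf A) : IsCosheaf (clopensComap f ⋙ A) := by
  constructor
  · have e : (clopensComap f).obj ⊥ = ⊥ := by
      apply SetLike.ext'
      simp [clopensComap]
    exact ⟨hA.initial.some.ofIso (A.mapIso (eqToIso e.symm))⟩
  · intro U V hUV
    have hUV' : Disjoint ((clopensComap f).obj U) ((clopensComap f).obj V) := by
      rw [disjoint_iff] at hUV ⊢
      have h0 : (U : Set (Y : Type u)) ∩ (V : Set (Y : Type u)) = ∅ := by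
        have := congrArg (fun W : Clopens (Y : Type u) => (W : Set (Y : Type u))) hUV
        simpa using this
      apply SetLike.ext'
      exact Set.preimage_inter.symm.trans ((congrArg _ h0).trans Set.preimage_empty)
    obtain ⟨h⟩ := hA.binary _ _ hUV'
    have e : (clopensComap f).obj U ⊔ (clopensComap f).obj V = (clopensComap f).obj (U ⊔ V) := by
      apply SetLike.ext'
      exact Set.preimage_union.symm
    refine ⟨h.ofIsoColimit (Cocones.ext (A.mapIso (eqToIso e)) ?_)⟩
    rintro ⟨⟨⟩⟩ <;>
      · dsimp [cosheafCofan]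
        exact (A.map_comp _ _).symm

/-- The direct image functor `f_* : CoSh(X, C) ⥤ CoSh(Y, C)`, `A ↦ A ∘ f⁻¹`. -/
def coshMapFun {X Y : Profinite.{u}} (f : X ⟶ Y) : CoSheaf X C ⥤ CoSheaf Y C :=
  ObjectProperty.lift _
    (ObjectProperty.ι _ ⋙ (Functor.whiskeringLeft (Clopens Y) (Clopens X) C).obj (clopensComap f))
    (fun A => A.property.comap f)

/-- The functor `Profinite ⥤ Cat` sending `X` to the category of cosheaves on `X` valued in `C`,
and a continuous map to the direct image functor. -/
def coshFunctor (C : Type u₂) [Category.{v₂} C] : Profinite.{u} ⥤ Cat where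
  obj X := Cat.of (CoSheaf X C)
  map f := (coshMapFun f).toCatHom
  map_id _ := rfl
  map_comp _ _ := rfl

/-- The total category `CoSh(C)` of profinite cosheaves valued in `C`, i.e. the Grothendieck
construction of `X ↦ CoSh(X, C)`. Objects are pairs `(X, A)` with `A` a cosheaf on `X`;
a morphism `(X, A) ⟶ (Y, B)` is a pair `(f, φ)` with `f : X ⟶ Y` continuous and
`φ : A ∘ f⁻¹ ⟶ B`. -/
def CoSh (C : Type u₂) [Category.{v₂} C] :=
  Grothendieck (coshFunctor.{u} C)

instance : Category (CoSh.{u} C) := inferInstanceAs (Category (Grothendieck _))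

/-- The global cosections functor `CoSh(C) ⥤ C`, `(A, X) ↦ A(X)`. -/
def globalCosections (C : Type u₂) [Category.{v₂} C] : CoSh.{u} C ⥤ C where
  obj P := (ObjectProperty.FullSubcategory.obj P.fiber).obj ⊤
  map {P Q} g :=
    (ObjectProperty.FullSubcategory.obj P.fiber).map (homOfLE (fun x _ => Set.mem_univ _) : (⊤ : Clopens P.base) ⟶ _) ≫
      NatTrans.app (InducedCategory.Hom.hom g.fiber) ⊤
  map_id := by
    intro P
    erw [CategoryTheory.Functor.map_id, Category.id_comp, Grothendieck.id_fiber, eqToHom_refl]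
    rfl
  map_comp := by
    intro P Q R f g
    erw [CategoryTheory.Functor.map_id, Category.id_comp, Category.id_comp]
    erw [CategoryTheory.Functor.map_id, Category.id_comp]
    erw [Grothendieck.comp_fiber, eqToHom_refl, Category.id_comp]
    rfl

/-- The poset of clopen neighbourhoods of a point, as a category. -/
def Nbhds (X : Profinite.{u}) (x : X) := ObjectProperty.FullSubcategory (fun U : Clopens X => x ∈ U)

instance (X : Profinite.{u}) (x : X) : Category (Nbhds X x) := ObjectProperty.FullSubcategory.category _

/-- The diagram of values of `A` on the clopen neighbourhoods of `x`; the costalk of `A` at `x`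
is its (inverse) limit. -/
def costalkDiagram {X : Profinite.{u}} (A : Clopens X ⥤ C) (x : X) : Nbhds X x ⥤ C :=
  ObjectProperty.ι _ ⋙ A

/-- The costalk `A_x = lim_{V ∋ x} A(V)` of a precosheaf at a point. -/
noncomputable def costalk {X : Profinite.{u}} (A : Clopens X ⥤ C) (x : X)
    [HasLimit (costalkDiagram A x)] : C :=
  limit (costalkDiagram A x)

/-- `c` is *a* costalk of `A` at `x` if the costalk diagram of `A` at `x` admits a limit cone
whose point is isomorphic to `c`. -/
def IsCostalk {X : Profinite.{u}} (A : Clopens X ⥤ C) (x : X) (c : C) : Prop :=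
  ∃ t : Cone (costalkDiagram A x), Nonempty (IsLimit t) ∧ Nonempty (t.pt ≅ c)

/-- The pro-completion of a category: the free completion under cofiltered limits, realised
concretely as the opposite of the category of left-exact functors to `Type`. -/
def ProCompletion (E : Type u₁) [Category.{v₁} E] :=
  (ObjectProperty.FullSubcategory fun F : E ⥤ Type v₁ => Nonempty (PreservesFiniteLimits F))ᵒᵖ

instance (E : Type u₁) [Category.{v₁} E] : Category (ProCompletion E) :=
  inferInstanceAs (Category (ObjectProperty.FullSubcategory _)ᵒᵖ)

/-- The canonical (co-Yoneda) embedding of a category into its pro-completion. -/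
def proEmbedding (E : Type u₁) [Category.{v₁} E] : E ⥤ ProCompletion E where
  obj e := Opposite.op ⟨coyoneda.obj (Opposite.op e), ⟨inferInstance⟩⟩
  map {e e'} f := Quiver.Hom.op
    (show (⟨coyoneda.obj (Opposite.op e'), ⟨inferInstance⟩⟩ : ObjectProperty.FullSubcategory _) ⟶
        ⟨coyoneda.obj (Opposite.op e), ⟨inferInstance⟩⟩ from ObjectProperty.homMk (coyoneda.map f.op))

/-- A regular category: it has finite limits, coequalisers of kernel pairs, and regular
epimorphisms are stable under pullback. -/
class IsRegularCategory (C : Type u₂) [Category.{v₂} C] : Prop where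
  hasFiniteLimits : HasFiniteLimits C
  hasCoeqOfKernelPairs : ∀ {R X Y : C} (f : X ⟶ Y) (a b : R ⟶ X),
    IsPullback a b f f → HasCoequalizer a b
  regularEpi_stable : ∀ {P X Y Z : C} (f : X ⟶ Z) (g : Y ⟶ Z) (p₁ : P ⟶ X) (p₂ : P ⟶ Y),
    IsPullback p₁ p₂ f g → Nonempty (RegularEpi f) → Nonempty (RegularEpi p₂)

/-- `D` is closed under subobjects in its pro-completion: any subobject (in `Pro(D)`) of an
object of `D` is isomorphic to an object of `D`. -/
def ClosedUnderSubobjects (D : Type u) [SmallCategory D] : Prop :=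
  ∀ (d : D) (c : ProCompletion D) (m : c ⟶ (proEmbedding D).obj d), Mono m →
    ∃ d' : D, Nonempty (c ≅ (proEmbedding D).obj d')

/-- The coprojection maps into binary coproducts are monomorphisms. -/
def MonoCoprojections (C : Type u₂) [Category.{v₂} C] : Prop :=
  ∀ (a b p : C) (inl : a ⟶ p) (inr : b ⟶ p),
    Nonempty (IsColimit (BinaryCofan.mk inl inr)) → Mono inl ∧ Mono inr

/-- Cofiltered limits commute with finite colimits in `C`: for every finite category `J`,
the colimit functor `(J ⥤ C) ⥤ C` preserves cofiltered limits (of shapes of size `w`). -/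
def CofilteredLimitsCommuteWithFiniteColimits (C : Type u₂) [Category.{v₂} C]
    [HasFiniteColimits C] : Prop :=
  ∀ (J : Type) [SmallCategory J] [FinCategory J] (K : Type w) [SmallCategory K] [IsCofiltered K],
    PreservesLimitsOfShape K (colim (J := J) (C := C))

/-- The full subcategory of "finite objects" of `CoSh(Pro(D))`: cosheaves `(A, X)` with `X`
finite such that every costalk of `A` lies in (the image of) `D`. -/
def CoShFinProp (D : Type u) [SmallCategory D] (P : CoSh.{u} (ProCompletion D)) : Prop :=
  Finite (P.base : Type u) ∧
    ∀ x : P.base, ∃ d : D, IsCostalk (ObjectProperty.FullSubcategory.obj P.fiber) x ((proEmbedding D).obj d)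

/-- The category `CoSh(Pro(D))_fin` of finite cosheaf objects. -/
def CoShFin (D : Type u) [SmallCategory D] := ObjectProperty.FullSubcategory (CoShFinProp D)

instance (D : Type u) [SmallCategory D] : Category (CoShFin D) := ObjectProperty.FullSubcategory.category _

end ProfiniteCosheaves

namespace ProfiniteCosheaves

variable {C : Type u₂} [Category.{v₂} C]

/-- The map of costalks induced by a morphism of precosheaves. -/
noncomputable def costalkMap {X : Profinite.{u}} {A B : Clopens X ⥤ C} (η : A ⟶ B) (x : X)
    [HasLimit (costalkDiagram A x)] [HasLimit (costalkDiagram B x)] :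
    costalk A x ⟶ costalk B x :=
  limMap (show costalkDiagram A x ⟶ costalkDiagram B x from
    Functor.whiskerLeft (ObjectProperty.ι fun U : Clopens X => x ∈ U) η)
end ProfiniteCosheaves

theorem CategoryTheory.Adjunction.bijective_comp_counit_app {D : Type*} [Category* D]
    {E : Type*} [Category* E] {L : D ⥤ E} {R : E ⥤ D} (adj : L ⊣ R) (hL : L.FullyFaithful)
    (S : D) (A : E) :
    Function.Bijective fun g : L.obj S ⟶ L.obj (R.obj A) => g ≫ adj.counit.app A := by
  have h : (fun g : L.obj S ⟶ L.obj (R.obj A) => g ≫ adj.counit.app A) =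
      (adj.homEquiv S A).symm ∘ hL.homEquiv.symm := by
    funext g
    simp [Adjunction.homEquiv_counit]
  rw [h]
  exact (adj.homEquiv S A).symm.bijective.comp hL.homEquiv.symm.bijective

namespace ProfiniteCosheaves

section Skyscraper

open scoped Classical

variable {C : Type u₂} [Category.{v₂} C] [HasInitial C] {X : Type*} [TopologicalSpace X] (x : X) (c : C)

noncomputable def skyscraper : Clopens X ⥤ C where
  obj U := if x ∈ U then c else ⊥_ C
  map {U V} f :=
    if hU : x ∈ U then eqToHom (if_pos hU) ≫ eqToHom (if_pos (leOfHom f hU)).symm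
    else eqToHom (if_neg hU) ≫ initial.to _
  map_id U := by
    split_ifs with hU
    · simp
    · exact (initialIsInitial.ofIso (eqToIso (if_neg hU).symm)).hom_ext _ _
  map_comp {U V W} f g := by
    split_ifs with hU
    · rw [dif_pos (leOfHom f hU)]
      simp
    · exact (initialIsInitial.ofIso (eqToIso (if_neg hU).symm)).hom_ext _ _

variable {x c}

noncomputable def skyscraperIsInitial {U : Clopens X} (hU : x ∉ U) :
    IsInitial ((skyscraper x c).obj U) :=
  initialIsInitial.ofIso (eqToIso (if_neg hU).symm)

noncomputable def skyscraperObjIso {U : Clopens X} (hU : x ∈ U) : (skyscraper x c).obj U ≅ c :=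
  eqToIso (if_pos hU)

theorem skyscraper_map_of_mem {U V : Clopens X} (f : U ⟶ V) (hU : x ∈ U) :
    (skyscraper x c).map f =
      (skyscraperObjIso hU).hom ≫ (skyscraperObjIso (leOfHom f hU)).inv :=
  dif_pos hU

theorem isIso_skyscraper_map {U V : Clopens X} (f : U ⟶ V) (h : x ∈ V → x ∈ U) :
    IsIso ((skyscraper x c).map f) := by
  by_cases hU : x ∈ U
  · rw [skyscraper_map_of_mem f hU]
    infer_instance
  · exact isIso_of_isInitial (skyscraperIsInitial hU) (skyscraperIsInitial (mt h hU)) _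

variable (x c)

theorem isCosheaf_skyscraper : IsCosheaf (skyscraper x c) where
  initial := ⟨skyscraperIsInitial (U := ⊥) id⟩
  binary U V hUV := by
    by_cases hU : x ∈ U
    · have hV : x ∉ V := fun hV => (hUV.le_bot ⟨hU, hV⟩ : x ∈ (⊥ : Clopens X))
      exact (BinaryCofan.isColimit_iff_isIso_inl (skyscraperIsInitial hV) _).2
        (isIso_skyscraper_map (homOfLE le_sup_left) fun _ => hU)
    · exact (BinaryCofan.isColimit_iff_isIso_inr (skyscraperIsInitial hU) _).2
        (isIso_skyscraper_map (homOfLE le_sup_right) fun h => h.resolve_left hU)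

end Skyscraper

section SkyscraperCostalk

open scoped Classical

variable {C : Type u₂} [Category.{v₂} C] [HasInitial C] {X : Profinite.{u}} {x : X} {c : C}

noncomputable def skyscraperDesc {B : Clopens X ⥤ C}
    (π : (Functor.const (Nbhds X x)).obj c ⟶ costalkDiagram B x) : skyscraper x c ⟶ B where
  app U := if hU : x ∈ U then (skyscraperObjIso hU).hom ≫ π.app (⟨U, hU⟩ : Nbhds X x)
    else (skyscraperIsInitial hU).to _
  naturality U V f := by
    by_cases hU : x ∈ U
    · have hV : x ∈ V := leOfHom f hU
      let g : (⟨U, hU⟩ : Nbhds X x) ⟶ (⟨V, hV⟩ : Nbhds X x) := ObjectProperty.homMk f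
      rw [skyscraper_map_of_mem f hU, dif_pos hU, dif_pos hV]
      -- retype the right-hand side through `costalkDiagram` so that `π.naturality g` matches
      change (_ ≫ _) ≫ _ ≫ π.app (⟨V, hV⟩ : Nbhds X x) =
        (_ ≫ π.app (⟨U, hU⟩ : Nbhds X x)) ≫ (costalkDiagram B x).map g
      simp only [Category.assoc, Iso.inv_hom_id_assoc, ← π.naturality g]
      exact congrArg _ (Category.id_comp (π.app (⟨V, hV⟩ : Nbhds X x))).symm
    · exact (skyscraperIsInitial hU).hom_ext _ _

theorem skyscraperDesc_app_of_mem {B : Clopens X ⥤ C}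
    (π : (Functor.const (Nbhds X x)).obj c ⟶ costalkDiagram B x) {U : Clopens X} (hU : x ∈ U) :
    (skyscraperDesc π).app U = (skyscraperObjIso hU).hom ≫ π.app (⟨U, hU⟩ : Nbhds X x) :=
  dif_pos hU

noncomputable def skyscraperHomEquiv (B : Clopens X ⥤ C) :
    (skyscraper x c ⟶ B) ≃ ((Functor.const (Nbhds X x)).obj c ⟶ costalkDiagram B x) where
  toFun ψ :=
    { app V := (skyscraperObjIso V.property).inv ≫ ψ.app V.obj
      naturality V W f := by
        have := ψ.naturality f.hom
        rw [skyscraper_map_of_mem f.hom V.property] at this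
        change 𝟙 c ≫ _ ≫ ψ.app W.obj = (_ ≫ ψ.app V.obj) ≫ B.map f.hom
        rw [Category.id_comp, Category.assoc, ← this]
        simp }
  invFun := skyscraperDesc
  left_inv ψ := by
    ext U
    by_cases hU : x ∈ U
    · rw [skyscraperDesc_app_of_mem _ hU]
      exact Iso.hom_inv_id_assoc _ _
    · exact (skyscraperIsInitial hU).hom_ext _ _
  right_inv π := by
    ext V
    change _ ≫ (skyscraperDesc π).app V.obj = _
    rw [skyscraperDesc_app_of_mem _ V.property]
    exact Iso.inv_hom_id_assoc _ _

theorem skyscraperHomEquiv_comp {B B' : Clopens X ⥤ C} (ψ : skyscraper x c ⟶ B) (η : B ⟶ B') :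
    skyscraperHomEquiv B' (ψ ≫ η) =
      skyscraperHomEquiv B ψ ≫ Functor.whiskerLeft (ObjectProperty.ι _) η := by
  ext V
  exact (Category.assoc _ _ _).symm

noncomputable def costalkHomEquiv (B : Clopens X ⥤ C) [HasLimit (costalkDiagram B x)] :
    (c ⟶ costalk B x) ≃ (skyscraper x c ⟶ B) :=
  (limit.isLimit _).homEquiv.trans (skyscraperHomEquiv B).symm

theorem costalkHomEquiv_comp {B B' : Clopens X ⥤ C} [HasLimit (costalkDiagram B x)]
    [HasLimit (costalkDiagram B' x)] (g : c ⟶ costalk B x) (η : B ⟶ B') :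
    costalkHomEquiv B' (g ≫ costalkMap η x) = costalkHomEquiv B g ≫ η := by
  apply (skyscraperHomEquiv B').injective
  dsimp only [costalkHomEquiv, Equiv.trans_apply]
  erw [Equiv.apply_symm_apply, skyscraperHomEquiv_comp, Equiv.apply_symm_apply]
  ext V
  exact (Category.assoc _ _ _).trans ((congrArg (g ≫ ·) (limMap_π _ V)).trans
    (Category.assoc _ _ _).symm)

end SkyscraperCostalk

theorem cosheafification_preserves_costalks_general (C : Type u₂) [Category.{u} C] [HasLimits C]
    [HasFiniteColimits C] (X : Profinite.{u}) (R : (Clopens X ⥤ C) ⥤ CoSheaf X C)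
    (adj : ObjectProperty.ι (fun A : Clopens X ⥤ C => IsCosheaf A) ⊣ R)
    (A : Clopens X ⥤ C) (x : X) :
    IsIso (costalkMap (adj.counit.app A) x) := by
  refine isIso_of_yoneda_map_bijective _ fun c => ?_
  have hcounit := adj.bijective_comp_counit_app (ObjectProperty.fullyFaithfulι _)
    ⟨skyscraper x c, isCosheaf_skyscraper x c⟩ A
  have hconj : (fun g : c ⟶ _ => g ≫ costalkMap (adj.counit.app A) x) =
      (costalkHomEquiv A).symm ∘ (fun ψ => ψ ≫ adj.counit.app A) ∘ costalkHomEquiv _ := by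
    funext g
    simp [← costalkHomEquiv_comp]
  rw [hconj]
  exact (Equiv.bijective _).comp (hcounit.comp (Equiv.bijective _))

/-- **Statement 14.** If `C` has all limits and finite colimits, and cofiltered limits commute
with finite colimits in `C`, then cosheafification preserves costalks: for any right adjoint
`R` of the inclusion of cosheaves into precosheaves, any precosheaf `A`, and any `x ∈ X`, the
canonical map `(A^cosh)_x ⟶ A_x` induced by the counit is an isomorphism. -/
theorem cosheafification_preserves_costalks (C : Type u₂) [Category.{u} C] [HasLimits C]
    [HasFiniteColimits C] (hcomm : CofilteredLimitsCommuteWithFiniteColimits.{u} C)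
    (X : Profinite.{u}) (R : (Clopens X ⥤ C) ⥤ CoSheaf X C)
    (adj : ObjectProperty.ι (fun A : Clopens X ⥤ C => IsCosheaf A) ⊣ R)
    (A : Clopens X ⥤ C) (x : X) :
    IsIso (costalkMap (adj.counit.app A) x) :=
  cosheafification_preserves_costalks_general C X R adj A x

end ProfiniteCosheaves
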